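/- Let $v\equiv 3\pmod 4$ be a prime power, $\mathbb{F}_v$ the finite field of order $v$ with primitive element $g$. Set $D_1=\{0\}$, $D_2$ the set of nonzero squares, $D_3$ the set of nonsquares. Then $\{D_1,D_2,D_3\}$ is a $(v,3;1,\frac{v-1}{2},\frac{v-1}{2};1,\frac{v+1}{4},\frac{v+1}{4})$-GSEDF in the additive group of $\mathbb{F}_v$. -/

import Mathlib

/-- The number of times `g` occurs in the multiset `Δ(A,B) = {x - y : x ∈ A, y ∈ B}`. -/
noncomputable def extDiffCount {G : Type*} [AddCommGroup G] (A B : Finset G) (g : G) : ℕ :=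
  letI := Classical.decEq G
  ((A ×ˢ B).filter (fun p => p.1 - p.2 = g)).card

/-- `{D i}` is a `(v, m; k₁,…,k_m; λ₁,…,λ_m)`-GSEDF in the finite abelian group `G`. -/
def IsGSEDF {G : Type*} [AddCommGroup G] [Fintype G] (v m : ℕ)
    (D : Fin m → Finset G) (k lam : Fin m → ℕ) : Prop :=
  Fintype.card G = v ∧
  (∀ i, (D i).card = k i) ∧
  (∀ i, 0 < k i) ∧ (∀ i, 0 < lam i) ∧
  (∀ i j, i ≠ j → Disjoint (D i) (D j)) ∧
  ∀ i, ∀ g : G, g ≠ 0 →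
    (∑ j ∈ Finset.univ.filter (· ≠ i), extDiffCount (D i) (D j) g) = lam i


/-! As `v ≡ 3 (mod 4)`, `-1` is a nonsquare, so `x ↦ -x` swaps the nonzero squares `Q` and the
nonsquares `N`. Multiplication by squares and negation both preserve `Δ(Q,Q)`, so it is constant on
`F \ {0}` and `Q` is the Paley difference set with `λ = (v - 3) / 4`; negation also carries
`Δ(N,N)` to `Δ(Q,Q)`. Since `{0}, Q, N` partition `F`, a nonzero `g` occurs `|A|` times in
`Δ(A,{0}) + Δ(A,Q) + Δ(A,N)` for every `A`; removing `Δ(A,A)` leaves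
`(v - 1) / 2 - (v - 3) / 4 = (v + 1) / 4` for `A = Q, N` and `1 - 0` for `A = {0}`. -/

open Finset

section extDiffCount

variable {G : Type*} [AddCommGroup G]

lemma extDiffCount_eq_card_filter [DecidableEq G] (A B : Finset G) (g : G) :
    extDiffCount A B g = #{y ∈ B | y + g ∈ A} := by
  unfold extDiffCount
  refine card_nbij' Prod.snd (fun y => (y + g, y)) ?_ ?_ ?_ ?_ <;> intro p hp <;>
    simp only [coe_filter, mem_product, Set.mem_ofPred_eq] at hp ⊢
  · obtain ⟨⟨ha, hb⟩, rfl⟩ := hp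
    simpa using And.intro hb ha
  · simpa using hp.symm
  · rw [← hp.2, add_sub_cancel]

lemma extDiffCount_neg (A B : Finset G) (g : G) :
    extDiffCount A B (-g) = extDiffCount B A g := by
  unfold extDiffCount
  refine card_nbij' Prod.swap Prod.swap ?_ ?_ ?_ ?_ <;> intro p hp <;>
    simp_all [← neg_sub p.1 p.2]

lemma extDiffCount_addEquiv {H : Type*} [AddCommGroup H] (φ : G ≃+ H) {A B : Finset G}
    {A' B' : Finset H} (hA : ∀ x, φ x ∈ A' ↔ x ∈ A) (hB : ∀ x, φ x ∈ B' ↔ x ∈ B) (g : G) :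
    extDiffCount A' B' (φ g) = extDiffCount A B g := by
  unfold extDiffCount
  refine card_nbij' (Prod.map φ.symm φ.symm) (Prod.map φ φ) ?_ ?_ ?_ ?_
  · rintro ⟨a', b'⟩ hp
    obtain ⟨a, rfl⟩ := φ.surjective a'
    obtain ⟨b, rfl⟩ := φ.surjective b'
    simp only [coe_filter, mem_product, Set.mem_ofPred_eq, ← map_sub, φ.injective.eq_iff, hA,
      hB] at hp
    simpa using hp
  · rintro ⟨a, b⟩ hp
    simp only [coe_filter, mem_product, Set.mem_ofPred_eq] at hp
    obtain ⟨⟨ha, hb⟩, rfl⟩ := hp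
    simp [hA, hB, ha, hb]
  all_goals intro p _; simp [Prod.map]

lemma extDiffCount_self_zero [DecidableEq G] (A : Finset G) : extDiffCount A A 0 = #A := by
  simp [extDiffCount_eq_card_filter]

lemma extDiffCount_singleton_self [DecidableEq G] (a : G) {g : G} (hg : g ≠ 0) :
    extDiffCount {a} {a} g = 0 := by
  simp [extDiffCount_eq_card_filter, hg]

lemma extDiffCount_union_right [DecidableEq G] (A : Finset G) {B C : Finset G}
    (h : Disjoint B C) (g : G) :
    extDiffCount A (B ∪ C) g = extDiffCount A B g + extDiffCount A C g := by
  simp only [extDiffCount_eq_card_filter, filter_union]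
  exact card_union_of_disjoint (disjoint_filter_filter h)

lemma extDiffCount_univ_right [Fintype G] [DecidableEq G] (A : Finset G) (g : G) :
    extDiffCount A univ g = #A := by
  rw [extDiffCount_eq_card_filter]
  refine card_nbij' (· + g) (· - g) ?_ ?_ ?_ ?_ <;> intro p hp <;> simp_all

lemma sum_extDiffCount [Fintype G] (A B : Finset G) :
    ∑ g, extDiffCount A B g = #A * #B := by
  classical
  rw [← card_product]
  exact (card_eq_sum_card_fiberwise (fun p _ => mem_univ (p.1 - p.2))).symm

end extDiffCount

section Paley

variable {F : Type*} [Field F] [Fintype F]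

lemma quadraticChar_neg_of_card_mod_four [DecidableEq F] (hv : Fintype.card F % 4 = 3) (x : F) :
    quadraticChar F (-x) = -quadraticChar F x := by
  have h : quadraticChar F (-1) = -1 := quadraticChar_neg_one_iff_not_isSquare.mpr
    (by rw [FiniteField.isSquare_neg_one_iff]; exact not_not.mpr hv)
  rw [neg_eq_neg_one_mul x, map_mul, h, neg_one_mul]

variable (F) [DecidableEq F] [DecidablePred (IsSquare : F → Prop)]

def nonzeroSquares : Finset F := {x | x ≠ 0 ∧ IsSquare x}

def nonsquares : Finset F := {x | ¬IsSquare x}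

variable {F}

lemma mem_nonzeroSquares_iff_quadraticChar {x : F} :
    x ∈ nonzeroSquares F ↔ quadraticChar F x = 1 := by
  simp only [nonzeroSquares, mem_filter, mem_univ, true_and]
  by_cases hx : x = 0
  · simp [hx]
  · rw [quadraticChar_one_iff_isSquare hx]
    exact and_iff_right hx

lemma mem_nonsquares_iff_quadraticChar {x : F} :
    x ∈ nonsquares F ↔ quadraticChar F x = -1 := by
  simp only [nonsquares, mem_filter, mem_univ, true_and, quadraticChar_neg_one_iff_not_isSquare]

lemma neg_mem_nonsquares_iff (hv : Fintype.card F % 4 = 3) {x : F} :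
    -x ∈ nonsquares F ↔ x ∈ nonzeroSquares F := by
  rw [mem_nonsquares_iff_quadraticChar, mem_nonzeroSquares_iff_quadraticChar,
    quadraticChar_neg_of_card_mod_four hv, neg_inj]

lemma mul_mem_nonzeroSquares_iff {c x : F} (hc : c ∈ nonzeroSquares F) :
    c * x ∈ nonzeroSquares F ↔ x ∈ nonzeroSquares F := by
  rw [mem_nonzeroSquares_iff_quadraticChar] at hc
  rw [mem_nonzeroSquares_iff_quadraticChar, mem_nonzeroSquares_iff_quadraticChar, map_mul, hc,
    one_mul]

lemma card_nonsquares (hv : Fintype.card F % 4 = 3) : #(nonsquares F) = #(nonzeroSquares F) :=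
  card_nbij' Neg.neg Neg.neg
    (fun x hx => (neg_mem_nonsquares_iff hv).mp (by simpa using hx))
    (fun x hx => (neg_mem_nonsquares_iff hv).mpr hx) (fun x _ => neg_neg x) (fun x _ => neg_neg x)

lemma disjoint_zero_nonzeroSquares_nonsquares :
    Disjoint {0} (nonzeroSquares F) ∧ Disjoint {0} (nonsquares F) ∧
      Disjoint (nonzeroSquares F) (nonsquares F) := by
  simp +contextual [disjoint_left, nonzeroSquares, nonsquares]

lemma zero_union_nonzeroSquares_union_nonsquares :
    {0} ∪ nonzeroSquares F ∪ nonsquares F = univ := by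
  ext x
  by_cases hx : IsSquare x <;> by_cases h0 : x = 0 <;> simp [nonzeroSquares, nonsquares, hx, h0]

lemma extDiffCount_zero_add_nonzeroSquares_add_nonsquares (A : Finset F) (g : F) :
    extDiffCount A {0} g + extDiffCount A (nonzeroSquares F) g + extDiffCount A (nonsquares F) g
      = #A := by
  obtain ⟨h0Q, h0N, hQN⟩ := disjoint_zero_nonzeroSquares_nonsquares (F := F)
  rw [← extDiffCount_union_right A h0Q, ← extDiffCount_union_right A
    (disjoint_union_left.mpr ⟨h0N, hQN⟩), zero_union_nonzeroSquares_union_nonsquares,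
    extDiffCount_univ_right]

lemma two_mul_card_nonzeroSquares_add_one (hv : Fintype.card F % 4 = 3) :
    2 * #(nonzeroSquares F) + 1 = Fintype.card F := by
  obtain ⟨h0Q, h0N, hQN⟩ := disjoint_zero_nonzeroSquares_nonsquares (F := F)
  rw [← card_univ, ← zero_union_nonzeroSquares_union_nonsquares,
    card_union_of_disjoint (disjoint_union_left.mpr ⟨h0N, hQN⟩), card_union_of_disjoint h0Q,
    card_nonsquares hv, card_singleton]
  ring

lemma extDiffCount_nonzeroSquares_mul {c : F} (hc : c ∈ nonzeroSquares F) (g : F) :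
    extDiffCount (nonzeroSquares F) (nonzeroSquares F) (c * g) =
      extDiffCount (nonzeroSquares F) (nonzeroSquares F) g := by
  have hc0 : c ≠ 0 := by simp_all [nonzeroSquares]
  have hmul := fun x => mul_mem_nonzeroSquares_iff (x := x) hc
  exact extDiffCount_addEquiv (DistribMulAction.toAddEquiv₀ F c hc0) hmul hmul g

lemma extDiffCount_nonzeroSquares_eq (hv : Fintype.card F % 4 = 3) {g h : F} (hg : g ≠ 0)
    (hh : h ≠ 0) :
    extDiffCount (nonzeroSquares F) (nonzeroSquares F) h =
      extDiffCount (nonzeroSquares F) (nonzeroSquares F) g := by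
  have hc : h / g * g = h := div_mul_cancel₀ h hg
  rcases quadraticChar_dichotomy (div_ne_zero hh hg) with hsq | hnsq
  · rw [← hc, extDiffCount_nonzeroSquares_mul (mem_nonzeroSquares_iff_quadraticChar.mpr hsq)]
  · have hneg : -(h / g) ∈ nonzeroSquares F := by
      rw [mem_nonzeroSquares_iff_quadraticChar, quadraticChar_neg_of_card_mod_four hv, hnsq,
        neg_neg]
    rw [← hc, ← neg_neg (h / g), neg_mul, extDiffCount_neg,
      extDiffCount_nonzeroSquares_mul hneg]

/-- `Δ(Q,Q)` is constant off `0`, so counting all of `Q × Q` gives `#Q + (v - 1) λ = #Q²`. -/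
lemma four_mul_extDiffCount_nonzeroSquares_add_three (hv : Fintype.card F % 4 = 3) {g : F}
    (hg : g ≠ 0) :
    4 * extDiffCount (nonzeroSquares F) (nonzeroSquares F) g + 3 = Fintype.card F := by
  have hcard := two_mul_card_nonzeroSquares_add_one hv
  set Q := nonzeroSquares F
  set lam := extDiffCount Q Q g
  have hconst : ∀ h ∈ univ.erase 0, extDiffCount Q Q h = lam :=
    fun h hh => extDiffCount_nonzeroSquares_eq hv hg (ne_of_mem_erase hh)
  have hsum := sum_extDiffCount Q Q
  rw [← add_sum_erase _ _ (mem_univ 0), sum_congr rfl hconst, sum_const,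
    card_erase_of_mem (mem_univ _), card_univ, extDiffCount_self_zero, smul_eq_mul] at hsum
  have hq : 0 < #Q := by omega
  have : 2 * lam + 1 = #Q := by
    refine Nat.eq_of_mul_eq_mul_left hq ?_
    rw [← hcard, Nat.add_sub_cancel] at hsum
    linarith
  omega

lemma extDiffCount_nonsquares (hv : Fintype.card F % 4 = 3) (g : F) :
    extDiffCount (nonsquares F) (nonsquares F) g =
      extDiffCount (nonzeroSquares F) (nonzeroSquares F) g := by
  have hneg := fun x => neg_mem_nonsquares_iff hv (x := x)
  calc extDiffCount (nonsquares F) (nonsquares F) g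
      = extDiffCount (nonsquares F) (nonsquares F) (AddEquiv.neg F (-g)) := by simp
    _ = extDiffCount (nonzeroSquares F) (nonzeroSquares F) (-g) :=
      extDiffCount_addEquiv _ hneg hneg _
    _ = extDiffCount (nonzeroSquares F) (nonzeroSquares F) g := extDiffCount_neg _ _ _

end Paley

/-- Paley-type GSEDF. For a finite field of order `v ≡ 3 (mod 4)`,
`{0}`, the nonzero squares, and the nonsquares form a
`(v, 3; 1, (v-1)/2, (v-1)/2; 1, (v+1)/4, (v+1)/4)`-GSEDF. -/
theorem gsedf_paley (F : Type*) [Field F] [Fintype F] [DecidableEq F]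
    [DecidablePred (IsSquare : F → Prop)]
    (hv : Fintype.card F % 4 = 3) :
    IsGSEDF (Fintype.card F) 3
      ![({0} : Finset F),
        Finset.univ.filter (fun x : F => x ≠ 0 ∧ IsSquare x),
        Finset.univ.filter (fun x : F => ¬ IsSquare x)]
      ![1, (Fintype.card F - 1) / 2, (Fintype.card F - 1) / 2]
      ![1, (Fintype.card F + 1) / 4, (Fintype.card F + 1) / 4] := by
  change IsGSEDF _ 3 ![{0}, nonzeroSquares F, nonsquares F] _ _
  have hQ := two_mul_card_nonzeroSquares_add_one hv
  have hN := card_nonsquares hv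
  obtain ⟨h0Q, h0N, hQN⟩ := disjoint_zero_nonzeroSquares_nonsquares (F := F)
  refine ⟨rfl, ?_, ?_, ?_, ?_, ?_⟩
  · intro i; fin_cases i <;> simp <;> omega
  · intro i; fin_cases i <;> simp <;> omega
  · intro i; fin_cases i <;> simp <;> omega
  · intro i j hij
    fin_cases i <;> fin_cases j <;> simp_all [disjoint_comm]
  · intro i g hg
    have hQQ := four_mul_extDiffCount_nonzeroSquares_add_three hv hg
    have hNN := extDiffCount_nonsquares hv g
    have h00 := extDiffCount_singleton_self (0 : F) hg
    have h0 := extDiffCount_zero_add_nonzeroSquares_add_nonsquares {0} g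
    rw [card_singleton] at h0
    have h1 := extDiffCount_zero_add_nonzeroSquares_add_nonsquares (nonzeroSquares F) g
    have h2 := extDiffCount_zero_add_nonzeroSquares_add_nonsquares (nonsquares F) g
    fin_cases i <;> simp [sum_filter, Fin.sum_univ_three]
    all_goals omega
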